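/- arXiv:2001.05584 — 2 statements merged into one kernel-verified Lean document; each statement's English description precedes it below -/
import Mathlib

section
/- Let Ω ⊂ P(ℝ^d) be a properly convex domain, p₀ ∈ Ω, x ∈ ∂Ω, p_n ∈ [p₀, x) a sequence converging to x, and g_n ∈ Aut(Ω) a sequence with sup_n H_Ω(g_n p₀, p_n) < ∞. If g_n converges in P(End(ℝ^d)) to T, then T(Ω) = F_Ω(x), the open face of x; in particular image(T) = span(F_Ω(x)). -/
open Matrix Topology Filter
open scoped MatrixGroups

noncomputable section

abbrev Vd (d : ℕ) := Fin d → ℝ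
abbrev Md (d : ℕ) := Matrix (Fin d) (Fin d) ℝ

open scoped Classical in
/-- The multiset of absolute values of the complex eigenvalues (roots of the
characteristic polynomial over `ℂ`, with multiplicity) of a real `d × d` matrix. -/
def eigMods {d : ℕ} (g : Md d) : Multiset ℝ :=
  ((g.charpoly.map (algebraMap ℝ ℂ)).roots).map (fun z => ‖z‖)

open scoped Classical in
/-- `g` is proximal: the largest modulus of an eigenvalue is attained exactly once. -/
def IsProximal {d : ℕ} (g : Md d) : Prop :=
  ∃ r ∈ eigMods g, (eigMods g).count r = 1 ∧ ∀ s ∈ eigMods g, s ≤ r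

/-- `ℓ` is the attracting eigenline of `g`: the eigenspace of a real eigenvalue of
maximal modulus, of dimension one. -/
def IsTopEigenline {d : ℕ} (g : Md d) (ℓ : Submodule ℝ (Vd d)) : Prop :=
  ∃ μ : ℝ, (∀ s ∈ eigMods g, s ≤ |μ|) ∧
    ℓ = Module.End.eigenspace (Matrix.toLin' g) μ ∧ Module.finrank ℝ ℓ = 1

/-- `C` is the cone over a properly convex domain `Ω ⊂ P(ℝ^d)`: an open convex
cone, nonempty, whose closure contains no line (salient). -/
def IsProperCone {d : ℕ} (C : Set (Vd d)) : Prop :=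
  IsOpen C ∧ Convex ℝ C ∧ C.Nonempty ∧
    (∀ v ∈ C, ∀ t : ℝ, 0 < t → t • v ∈ C) ∧
    (∀ v ∈ closure C, -v ∈ closure C → v = 0)

/-- `g` induces an automorphism of the properly convex domain with cone `C`. -/
def ConeAut {d : ℕ} (C : Set (Vd d)) (g : Md d) : Prop :=
  IsUnit g ∧ (fun v => g.mulVec v) '' C = C

/-- Gauge `M(u/v) = inf{t > 0 : t v - u ∈ closure C}`. -/
def gaugeM {d : ℕ} (C : Set (Vd d)) (u v : Vd d) : ℝ :=
  sInf {t : ℝ | 0 < t ∧ t • v - u ∈ closure C}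

/-- The Hilbert distance between the projective points `[u]`, `[v]` of the properly
convex domain with cone `C` : `H([u],[v]) = (1/2) log (M(u/v) M(v/u))`. -/
def hilbertDist {d : ℕ} (C : Set (Vd d)) (u v : Vd d) : ℝ :=
  (1/2) * Real.log (gaugeM C u v * gaugeM C v u)

/-- The closed projective segment `[[u],[v]]` is contained in `∂Ω`. -/
def BSeg {d : ℕ} (C : Set (Vd d)) (u v : Vd d) : Prop :=
  ∀ s t : ℝ, 0 ≤ s → 0 ≤ t → s • u + t • v ∉ C

/-- `[v]` belongs to the open face `F_Ω([u])`: either `[v] = [u]`, or some open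
projective segment contained in `closure Ω` contains both `[u]` and `[v]`. -/
def InFace {d : ℕ} (C : Set (Vd d)) (u v : Vd d) : Prop :=
  v ∈ closure C ∧ ((∃ t : ℝ, 0 < t ∧ v = t • u) ∨
    ∃ ε : ℝ, 0 < ε ∧ u - ε • v ∈ closure C ∧ v - ε • u ∈ closure C)

/-- `[v]` is an extreme point of `closure Ω`: it is not in the interior of any
nondegenerate projective segment contained in `closure Ω`. -/
def IsExtremePt {d : ℕ} (C : Set (Vd d)) (v : Vd d) : Prop :=
  v ∈ closure C ∧ v ≠ 0 ∧ ∀ a ∈ closure C, ∀ b ∈ closure C,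
    ∀ s t : ℝ, 0 < s → 0 < t → v = s • a + t • b → ∃ c : ℝ, a = c • b


/-- The quotient topology on the projective space `P(V)`. -/
instance projTopology {K V : Type*} [DivisionRing K] [AddCommGroup V] [Module K V]
    [TopologicalSpace V] : TopologicalSpace (Projectivization K V) :=
  inferInstanceAs (TopologicalSpace (Quotient (projectivizationSetoid K V)))

/-- The set of projective points with a representative in `A`. -/
def projSet {d : ℕ} (A : Set (Vd d)) : Set (Projectivization ℝ (Vd d)) :=
  {x | ∃ (v : Vd d) (hv : v ≠ 0), v ∈ A ∧ x = Projectivization.mk ℝ v hv}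

/-- The action of `γ ∈ GL(d,ℝ)` on the projective space `P(ℝ^d)`. -/
def pAct {d : ℕ} (γ : GL (Fin d) ℝ) : Projectivization ℝ (Vd d) → Projectivization ℝ (Vd d) :=
  Projectivization.map (Matrix.toLin' (↑γ : Md d)) (by
    have : Function.LeftInverse (Matrix.toLin' (↑γ⁻¹ : Md d)) (Matrix.toLin' (↑γ : Md d)) := by
      intro v
      simp only [Matrix.toLin'_apply, Matrix.mulVec_mulVec]
      rw [Matrix.coe_units_inv, Matrix.nonsing_inv_mul _ ((Matrix.isUnit_iff_isUnit_det _).mp γ.isUnit), Matrix.one_mulVec]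
    exact this.injective)

/-- `T` lies in the closure of `Λ` in `P(End(ℝ^d))`. -/
def InEndClosure {d : ℕ} (Λ : Set (Md d)) (T : Md d) : Prop :=
  T ≠ 0 ∧ ∃ (g : ℕ → Md d) (c : ℕ → ℝ), (∀ n, g n ∈ Λ) ∧
    Tendsto (fun n => c n • g n) atTop (nhds T)


/-!
Write `D = closure C`, ordered as a cone. After passing to a subsequence and fixing a sign
`σ = ±1`, `δ_k G_k → σ T` with `δ_k > 0`; so `σ T` maps `D` into `D` and, since `C` spans,
does not vanish on `C`.

The bound on the Hilbert distance says that `W_k = δ_k G_k u₀` and `P_k = c_k p_k` dominate each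
other, `W_k ≥ α_k P_k` and `P_k ≥ β_k W_k`, with `α_k β_k` bounded below. As `D` is salient it is a
normal cone (`0 ≤ y ≤ z` forces `m ‖y‖ ≤ ‖z‖`), which bounds `α_k, β_k` above, hence also below,
uniformly in `k`. In the limit `σ T u₀` and `x` dominate each other, and since any two points
of `C` dominate each other, `σ T (C) ⊆ F(x)`.

Conversely, for `w ∈ F(x)` the vector `z = w - ε σ T u₀` lies in `D` for small `ε > 0`, and
`z ≤ γ W_k` for a fixed `γ` and all large `k` (using `x ≤ 2 P_k`: the `x`-coefficient of `P_k`
tends to `1`). So `y_k = δ_k⁻¹ G_k⁻¹ z` is a bounded sequence in `D` with `δ_k G_k y_k = z`, and a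
limit point `y` gives `σ T y = z`, i.e. `w = σ T (y + ε u₀)` with `y + ε u₀ ∈ C`. Finally
`range T = span T(C) = span F(x)`.
-/

def ConeDominates {d : ℕ} (C : Set (Vd d)) (x y : Vd d) : Prop :=
  ∃ ε : ℝ, 0 < ε ∧ x - ε • y ∈ closure C

theorem ConeDominates.mulVec {d : ℕ} {C : Set (Vd d)} {T : Md d}
    (hT : ∀ x ∈ closure C, T *ᵥ x ∈ closure C) {x y : Vd d} (hxy : ConeDominates C x y) :
    ConeDominates C (T *ᵥ x) (T *ᵥ y) :=
  let ⟨ε, hε, h⟩ := hxy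
  ⟨ε, hε, by simpa [Matrix.mulVec_sub, Matrix.mulVec_smul] using hT _ h⟩

namespace ConeAut

variable {d : ℕ} {C : Set (Vd d)} {g : Md d}

theorem mulVec_mem (hg : ConeAut C g) {v : Vd d} (hv : v ∈ C) : g *ᵥ v ∈ C :=
  hg.2 ▸ Set.mem_image_of_mem _ hv

theorem mulVec_mem_closure (hg : ConeAut C g) {x : Vd d} (hx : x ∈ closure C) :
    g *ᵥ x ∈ closure C :=
  hg.2 ▸ image_closure_subset_closure_image (Continuous.matrix_mulVec continuous_const
    continuous_id) ⟨x, hx, rfl⟩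

theorem inv_mulVec_mulVec (hg : ConeAut C g) (x : Vd d) : g⁻¹ *ᵥ (g *ᵥ x) = x := by
  rw [Matrix.mulVec_mulVec, Matrix.nonsing_inv_mul g ((Matrix.isUnit_iff_isUnit_det g).1 hg.1),
    Matrix.one_mulVec]

theorem mulVec_inv_mulVec (hg : ConeAut C g) (x : Vd d) : g *ᵥ (g⁻¹ *ᵥ x) = x := by
  rw [Matrix.mulVec_mulVec, Matrix.mul_nonsing_inv g ((Matrix.isUnit_iff_isUnit_det g).1 hg.1),
    Matrix.one_mulVec]

theorem inv (hg : ConeAut C g) : ConeAut C g⁻¹ := by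
  refine ⟨(Matrix.isUnit_nonsing_inv_iff).2 hg.1, Set.ext fun v => ⟨?_, fun hv => ?_⟩⟩
  · rintro ⟨w, hw, rfl⟩
    rw [← hg.2] at hw
    obtain ⟨x, hx, rfl⟩ := hw
    simpa only [hg.inv_mulVec_mulVec]
  · exact ⟨g *ᵥ v, hg.mulVec_mem hv, hg.inv_mulVec_mulVec v⟩

end ConeAut

theorem exists_mem_mulVec_eq_of_tendsto {d : ℕ} {A : ℕ → Md d} {T : Md d}
    (hA : Tendsto A atTop (𝓝 T)) {S : Set (Vd d)} (hS : IsClosed S) {y : ℕ → Vd d}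
    (hyS : ∀ k, y k ∈ S) {R : ℝ} (hyR : ∀ᶠ k in atTop, ‖y k‖ ≤ R) {z : Vd d}
    (hAy : ∀ k, A k *ᵥ y k = z) : ∃ v ∈ S, T *ᵥ v = z := by
  obtain ⟨v, -, φ, hφ, hyv⟩ := tendsto_subseq_of_frequently_bounded
    (Metric.isBounded_closedBall (x := (0 : Vd d)) (r := R))
    (hyR.frequently.mono fun k hk => mem_closedBall_zero_iff.2 hk)
  have hlim : Tendsto (fun j => A (φ j) *ᵥ y (φ j)) atTop (𝓝 (T *ᵥ v)) :=
    ((continuous_fst.matrix_mulVec continuous_snd).tendsto (T, v)).comp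
      ((hA.comp hφ.tendsto_atTop).prodMk_nhds hyv)
  simp only [hAy] at hlim
  exact ⟨v, hS.mem_of_tendsto hyv (Eventually.of_forall fun k => hyS (φ k)),
    tendsto_nhds_unique hlim tendsto_const_nhds⟩


namespace IsProperCone

variable {d : ℕ} {C : Set (Vd d)}

theorem smul_mem (hC : IsProperCone C) {x : Vd d} (hx : x ∈ C) {t : ℝ} (ht : 0 < t) :
    t • x ∈ C :=
  hC.2.2.2.1 x hx t ht

theorem eq_zero_of_mem_closure_of_neg_mem (hC : IsProperCone C) {x : Vd d}
    (hx : x ∈ closure C) (hx' : -x ∈ closure C) : x = 0 :=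
  hC.2.2.2.2 x hx hx'

theorem exists_pos_add_smul_mem (hC : IsProperCone C) {v : Vd d} (hv : v ∈ C) (u : Vd d) :
    ∃ s : ℝ, 0 < s ∧ v + s • u ∈ C := by
  have hlim : Tendsto (fun s : ℝ => v + s • u) (𝓝[>] 0) (𝓝 v) := by
    have := ((continuous_const.add (continuous_id.smul continuous_const)).tendsto
      (0 : ℝ)).mono_left (nhdsWithin_le_nhds (s := Set.Ioi 0)) (f := fun s : ℝ => v + s • u)
    simpa using this
  exact ((hlim.eventually (hC.1.mem_nhds hv)).and self_mem_nhdsWithin).exists.imp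
    fun s hs => ⟨hs.2, hs.1⟩

theorem zero_mem_closure (hC : IsProperCone C) : (0 : Vd d) ∈ closure C := by
  obtain ⟨v, hv⟩ := hC.2.2.1
  have hlim : Tendsto (fun t : ℝ => t • v) (𝓝[>] 0) (𝓝 0) := by
    simpa using ((continuous_id.smul continuous_const).tendsto (0 : ℝ)).mono_left
      (nhdsWithin_le_nhds (s := Set.Ioi 0)) (f := fun t : ℝ => t • v)
  exact mem_closure_of_tendsto hlim (eventually_mem_nhdsWithin.mono fun t ht => hC.smul_mem hv ht)

theorem smul_mem_closure (hC : IsProperCone C) {x : Vd d} (hx : x ∈ closure C) {t : ℝ}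
    (ht : 0 ≤ t) : t • x ∈ closure C := by
  rcases ht.eq_or_lt with rfl | ht
  · simpa using hC.zero_mem_closure
  · exact closure_mono (Set.image_subset_iff.2 fun y hy => hC.smul_mem hy ht)
      (image_closure_subset_closure_image (continuous_const_smul t) ⟨x, hx, rfl⟩)

theorem add_mem_closure (hC : IsProperCone C) {x y : Vd d} (hx : x ∈ closure C)
    (hy : y ∈ closure C) : x + y ∈ closure C := by
  have := hC.smul_mem_closure (hC.2.1.closure hx hy (by norm_num : (0 : ℝ) ≤ 1 / 2)
    (by norm_num : (0 : ℝ) ≤ 1 / 2) (by norm_num)) (by norm_num : (0 : ℝ) ≤ 2)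
  rwa [smul_add, smul_smul, smul_smul, show (2 : ℝ) * (1 / 2) = 1 by norm_num, one_smul,
    one_smul] at this

theorem add_mem_of_mem_closure (hC : IsProperCone C) {x y : Vd d} (hx : x ∈ C)
    (hy : y ∈ closure C) : x + y ∈ C := by
  have := hC.2.1.combo_closure_interior_mem_interior hy (hC.1.interior_eq.symm ▸ hx)
    (by norm_num : (0 : ℝ) ≤ 1 / 2) (by norm_num : (0 : ℝ) < 1 / 2) (by norm_num)
  rw [hC.1.interior_eq] at this
  have := hC.smul_mem this (by norm_num : (0 : ℝ) < 2)
  rwa [smul_add, smul_smul, smul_smul, show (2 : ℝ) * (1 / 2) = 1 by norm_num, one_smul,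
    one_smul, add_comm] at this

theorem sub_smul_mem_closure_trans (hC : IsProperCone C) {x y z : Vd d} {a b : ℝ}
    (hxy : x - a • y ∈ closure C) (hyz : y - b • z ∈ closure C) (ha : 0 ≤ a) :
    x - (a * b) • z ∈ closure C := by
  have := hC.add_mem_closure hxy (hC.smul_mem_closure hyz ha)
  rwa [show x - a • y + a • (y - b • z) = x - (a * b) • z by module] at this

theorem sub_smul_mem_closure_of_le (hC : IsProperCone C) {x y : Vd d} {a b : ℝ}
    (hxy : x - a • y ∈ closure C) (hy : y ∈ closure C) (hba : b ≤ a) :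
    x - b • y ∈ closure C := by
  have := hC.add_mem_closure hxy (hC.smul_mem_closure hy (sub_nonneg.2 hba))
  rwa [show x - a • y + (a - b) • y = x - b • y by module] at this

theorem zero_notMem (hC : IsProperCone C) {x : Vd d} (hx : x ≠ 0) : (0 : Vd d) ∉ C := by
  intro h0
  obtain ⟨s, hs, hsx⟩ := hC.exists_pos_add_smul_mem h0 x
  obtain ⟨t, ht, htx⟩ := hC.exists_pos_add_smul_mem h0 (-x)
  rw [zero_add] at hsx htx
  have h1 := hC.smul_mem hsx (inv_pos.2 hs)
  have h2 := hC.smul_mem htx (inv_pos.2 ht)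
  rw [smul_smul, inv_mul_cancel₀ hs.ne', one_smul] at h1
  rw [smul_smul, inv_mul_cancel₀ ht.ne', one_smul] at h2
  exact hx (hC.eq_zero_of_mem_closure_of_neg_mem (subset_closure h1) (subset_closure h2))

theorem span_eq_top (hC : IsProperCone C) : Submodule.span ℝ C = ⊤ := by
  obtain ⟨v, hv⟩ := hC.2.2.1
  refine Submodule.eq_top_iff'.2 fun x => ?_
  obtain ⟨s, hs, hsx⟩ := hC.exists_pos_add_smul_mem hv x
  have := Submodule.smul_mem _ s⁻¹ (Submodule.sub_mem _ (Submodule.subset_span hsx)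
    (Submodule.subset_span hv))
  rwa [add_sub_cancel_left, smul_smul, inv_mul_cancel₀ hs.ne', one_smul] at this

theorem exists_pos_mul_norm_le (hC : IsProperCone C) :
    ∃ m : ℝ, 0 < m ∧
      ∀ x y : Vd d, x ∈ closure C → y - x ∈ closure C → m * ‖x‖ ≤ ‖y‖ := by
  have hne : (closure C).Nonempty := hC.2.2.1.closure
  have hpos : ∀ x ∈ closure C ∩ Metric.sphere 0 1, 0 < Metric.infDist (-x) (closure C) :=
    fun x ⟨hxD, hx1⟩ => (isClosed_closure.notMem_iff_infDist_pos hne).1 fun hx => by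
      simp [hC.eq_zero_of_mem_closure_of_neg_mem hxD hx] at hx1
  obtain ⟨m, hm, hmin⟩ :=
    ((isCompact_sphere (0 : Vd d) 1).inter_left isClosed_closure).exists_forall_le'
    ((Metric.continuous_infDist_pt _).comp continuous_neg).continuousOn hpos
  refine ⟨m, hm, fun x y hx hyx => ?_⟩
  rcases eq_or_ne x 0 with rfl | hx0
  · simp
  have hxn : 0 < ‖x‖ := norm_pos_iff.2 hx0
  have hle := hmin (‖x‖⁻¹ • x) ⟨hC.smul_mem_closure hx (by positivity), by
    simp [norm_smul, hxn.ne']⟩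
  have hdist := Metric.infDist_le_dist_of_mem (x := -(‖x‖⁻¹ • x))
    (hC.smul_mem_closure hyx (inv_nonneg.2 hxn.le))
  rw [dist_eq_norm, show -(‖x‖⁻¹ • x) - ‖x‖⁻¹ • (y - x) = -(‖x‖⁻¹ • y) by module,
    norm_neg, norm_smul, norm_inv, norm_norm] at hdist
  have := hle.trans hdist
  rwa [le_inv_mul_iff₀ hxn, mul_comm] at this

theorem coneDominates_trans (hC : IsProperCone C) {x y z : Vd d} (hxy : ConeDominates C x y)
    (hyz : ConeDominates C y z) : ConeDominates C x z :=
  let ⟨a, ha, hxy⟩ := hxy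
  let ⟨b, hb, hyz⟩ := hyz
  ⟨a * b, mul_pos ha hb, hC.sub_smul_mem_closure_trans hxy hyz ha.le⟩

theorem coneDominates_of_mem (hC : IsProperCone C) {x : Vd d} (hx : x ∈ C) (y : Vd d) :
    ConeDominates C x y := by
  obtain ⟨s, hs, hxy⟩ := hC.exists_pos_add_smul_mem hx (-y)
  exact ⟨s, hs, subset_closure (by rwa [smul_neg, ← sub_eq_add_neg] at hxy)⟩

theorem inFace_iff (hC : IsProperCone C) {u v : Vd d} (hu : u ∈ closure C) :
    InFace C u v ↔ ConeDominates C u v ∧ ConeDominates C v u := by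
  constructor
  · rintro ⟨-, ⟨t, ht, rfl⟩ | ⟨ε, hε, h1, h2⟩⟩
    · refine ⟨⟨(2 * t)⁻¹, by positivity, ?_⟩, ⟨t / 2, by positivity, ?_⟩⟩
      · rw [smul_smul, show u - ((2 * t)⁻¹ * t) • u = (1 / 2 : ℝ) • u by
          field_simp; module]
        exact hC.smul_mem_closure hu (by norm_num)
      · rw [show t • u - (t / 2) • u = (t / 2) • u by module]
        exact hC.smul_mem_closure hu (by positivity)
    · exact ⟨⟨ε, hε, h1⟩, ⟨ε, hε, h2⟩⟩
  · rintro ⟨⟨a, ha, h1⟩, ⟨b, hb, h2⟩⟩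
    have hv : v ∈ closure C := by
      simpa using hC.add_mem_closure h2 (hC.smul_mem_closure hu hb.le)
    exact ⟨hv, Or.inr ⟨min a b, lt_min ha hb,
      hC.sub_smul_mem_closure_of_le h1 hv (min_le_left a b),
      hC.sub_smul_mem_closure_of_le h2 hu (min_le_right a b)⟩⟩

theorem gaugeM_pos_and_sub_mem (hC : IsProperCone C) (h0 : (0 : Vd d) ∉ C) {u v : Vd d}
    (hu : u ∈ C) (hv : v ∈ C) : 0 < gaugeM C u v ∧ gaugeM C u v • v - u ∈ closure C := by
  obtain ⟨s, hs, hvu⟩ := hC.coneDominates_of_mem hv u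
  have hne : {t : ℝ | 0 < t ∧ t • v - u ∈ closure C}.Nonempty :=
    ⟨s⁻¹, inv_pos.2 hs, by
      simpa [smul_sub, smul_smul, inv_mul_cancel₀ hs.ne'] using
        hC.smul_mem_closure hvu (inv_nonneg.2 hs.le)⟩
  have hmem : gaugeM C u v • v - u ∈ closure C :=
    closure_minimal (fun t ht => ht.2)
      (isClosed_closure.preimage (continuous_id.smul continuous_const |>.sub continuous_const))
      (csInf_mem_closure hne ⟨0, fun t ht => ht.1.le⟩)
  refine ⟨(le_csInf hne fun t ht => ht.1.le).lt_of_ne fun h => h0 ?_, hmem⟩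
  rw [gaugeM, ← h, zero_smul, zero_sub] at hmem
  rwa [← hC.eq_zero_of_mem_closure_of_neg_mem (subset_closure hu) hmem]

theorem exists_sub_smul_mem_of_hilbertDist_le (hC : IsProperCone C) (h0 : (0 : Vd d) ∉ C)
    {u v : Vd d} (hu : u ∈ C) (hv : v ∈ C) {M : ℝ} (huv : hilbertDist C u v ≤ M) {s t : ℝ}
    (hs : 0 < s) (ht : 0 < t) :
    ∃ α β : ℝ, 0 ≤ α ∧ 0 ≤ β ∧ Real.exp (-(2 * M)) ≤ α * β ∧
      s • u - α • (t • v) ∈ closure C ∧ t • v - β • (s • u) ∈ closure C := by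
  obtain ⟨hA, hAvu⟩ := hC.gaugeM_pos_and_sub_mem h0 hu hv
  obtain ⟨hB, hBuv⟩ := hC.gaugeM_pos_and_sub_mem h0 hv hu
  set A := gaugeM C u v
  set B := gaugeM C v u
  have hAB : A * B ≤ Real.exp (2 * M) := by
    rw [← Real.log_le_iff_le_exp (mul_pos hA hB)]
    unfold hilbertDist at huv
    linarith
  refine ⟨s / (B * t), t / (A * s), by positivity, by positivity, ?_, ?_, ?_⟩
  · rw [Real.exp_neg, show s / (B * t) * (t / (A * s)) = (A * B)⁻¹ by field_simp]
    exact inv_anti₀ (mul_pos hA hB) hAB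
  · convert hC.smul_mem_closure hBuv (div_pos hs hB).le using 1
    match_scalars <;> field_simp
  · convert hC.smul_mem_closure hAvu (div_pos ht hA).le using 1
    match_scalars <;> field_simp

theorem exists_pos_eventually_sub_smul_mem (hC : IsProperCone C) {X Y : ℕ → Vd d}
    {x y : Vd d} (hX : Tendsto X atTop (𝓝 x)) (hx : x ≠ 0) (hY : Tendsto Y atTop (𝓝 y))
    (hXC : ∀ᶠ k in atTop, X k ∈ closure C) (hYC : ∀ᶠ k in atTop, Y k ∈ closure C)
    {κ : ℝ} (hκ : 0 < κ) (hXY : ∀ᶠ k in atTop, ∃ α β : ℝ, 0 ≤ β ∧ κ ≤ α * β ∧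
      X k - α • Y k ∈ closure C ∧ Y k - β • X k ∈ closure C) :
    ∃ a : ℝ, 0 < a ∧ ∀ᶠ k in atTop, X k - a • Y k ∈ closure C := by
  obtain ⟨m, hm, hnorm⟩ := hC.exists_pos_mul_norm_le
  have hxn : 0 < ‖x‖ := norm_pos_iff.2 hx
  set βmax := (‖y‖ + 1) / (m * (‖x‖ / 2))
  have hβmax : 0 < βmax := by positivity
  refine ⟨κ / βmax, by positivity, ?_⟩
  filter_upwards [hXY, hXC, hYC, hX.norm.eventually (lt_mem_nhds (half_lt_self hxn)),
    hY.norm.eventually (gt_mem_nhds (lt_add_one ‖y‖))]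
    with k ⟨α, β, hβ, hαβ, h1, h2⟩ hXk hYk hXn hYn
  have hβpos : 0 < β := hβ.lt_of_ne (by rintro rfl; linarith)
  have hβle : β ≤ βmax := by
    have := hnorm _ _ (hC.smul_mem_closure hXk hβ) h2
    rw [norm_smul, Real.norm_of_nonneg hβ] at this
    rw [le_div_iff₀ (by positivity)]
    nlinarith [mul_lt_mul_of_pos_left hXn (mul_pos hβpos hm)]
  refine hC.sub_smul_mem_closure_of_le h1 hYk ?_
  calc κ / βmax ≤ κ / β := div_le_div_of_nonneg_left hκ.le hβpos hβle
    _ ≤ α := (div_le_iff₀ hβpos).2 hαβ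

theorem notMem_span_singleton (hC : IsProperCone C) {u x : Vd d} (hu : u ∈ C)
    (hx : x ∈ closure C) (hx0 : x ≠ 0) (hxC : x ∉ C) : x ∉ Submodule.span ℝ {u} := by
  rw [Submodule.mem_span_singleton]
  rintro ⟨r, rfl⟩
  rcases lt_trichotomy r 0 with hr | rfl | hr
  · refine hx0 (hC.eq_zero_of_mem_closure_of_neg_mem hx (subset_closure ?_))
    simpa [neg_smul] using hC.smul_mem hu (neg_pos.2 hr)
  · exact hx0 (zero_smul _ _)
  · exact hxC (hC.smul_mem hu hr)

theorem eventually_pos_and_sub_smul_mem (hC : IsProperCone C) {u x : Vd d} (hu : u ∈ C)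
    (hx : x ∈ closure C) (hx0 : x ≠ 0) (hxC : x ∉ C) {p : ℕ → Vd d}
    (hp : ∀ n, ∃ a b : ℝ, 0 < a ∧ 0 ≤ b ∧ p n = a • u + b • x) {c : ℕ → ℝ}
    (hc : Tendsto (fun n => c n • p n) atTop (𝓝 x)) :
    ∀ᶠ n in atTop, 0 < c n ∧ c n • p n - (1 / 2 : ℝ) • x ∈ closure C := by
  obtain ⟨f, hfx, hfu⟩ :=
    Submodule.exists_le_ker_of_notMem (hC.notMem_span_singleton hu hx hx0 hxC)
  have hfu : f u = 0 := hfu (Submodule.mem_span_singleton_self u)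
  -- `f (c n • p n) / f x` is the coefficient of `x` in `c n • p n`.
  have hlim : Tendsto (fun n => f (c n • p n) / f x) atTop (𝓝 1) := by
    simpa [div_self hfx] using
      ((f.continuous_of_finiteDimensional.tendsto x).comp hc).div_const (f x)
  filter_upwards [hlim.eventually (lt_mem_nhds (by norm_num : (1 / 2 : ℝ) < 1))] with n hn
  obtain ⟨a, b, ha, hb, hpn⟩ := hp n
  rw [hpn, map_smul, map_add, map_smul, map_smul, hfu, smul_eq_mul, smul_eq_mul, smul_eq_mul,
    mul_zero, zero_add, ← mul_assoc, mul_div_assoc, div_self hfx, mul_one] at hn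
  have hcn : 0 < c n := by
    by_contra! h
    nlinarith
  refine ⟨hcn, ?_⟩
  rw [hpn, show c n • (a • u + b • x) - (1 / 2 : ℝ) • x =
    (c n * a) • u + (c n * b - 1 / 2) • x by module]
  exact hC.add_mem_closure (hC.smul_mem_closure (subset_closure hu) (by positivity))
    (hC.smul_mem_closure hx (by linarith))

theorem range_toLin'_eq_span_image (hC : IsProperCone C) (T : Md d) :
    LinearMap.range (Matrix.toLin' T) = Submodule.span ℝ ((T *ᵥ ·) '' C) := by
  rw [LinearMap.range_eq_map, ← hC.span_eq_top, Submodule.map_span]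
  rfl

theorem inFace_mulVec (hC : IsProperCone C) {T : Md d}
    (hTC : ∀ y ∈ closure C, T *ᵥ y ∈ closure C) {u x v : Vd d} (hu : u ∈ C)
    (hx : x ∈ closure C) (hxTu : ConeDominates C x (T *ᵥ u))
    (hTux : ConeDominates C (T *ᵥ u) x) (hv : v ∈ C) : InFace C x (T *ᵥ v) :=
  (hC.inFace_iff hx).2
    ⟨hC.coneDominates_trans hxTu ((hC.coneDominates_of_mem hu v).mulVec hTC),
      hC.coneDominates_trans ((hC.coneDominates_of_mem hv u).mulVec hTC) hTux⟩

variable {G : ℕ → Md d} {δ : ℕ → ℝ} {T : Md d}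

theorem mulVec_mem_closure_of_tendsto (hC : IsProperCone C) (hG : ∀ k, ConeAut C (G k))
    (hδ : ∀ k, 0 < δ k) (hT : Tendsto (fun k => δ k • G k) atTop (𝓝 T)) {x : Vd d}
    (hx : x ∈ closure C) : T *ᵥ x ∈ closure C := by
  have : Tendsto (fun k => (δ k • G k) *ᵥ x) atTop (𝓝 (T *ᵥ x)) :=
    ((continuous_id.matrix_mulVec continuous_const).tendsto T).comp hT
  refine isClosed_closure.mem_of_tendsto this (.of_forall fun k => ?_)
  simpa [Matrix.smul_mulVec] using hC.smul_mem_closure ((hG k).mulVec_mem_closure hx) (hδ k).le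

theorem mulVec_ne_zero (hC : IsProperCone C) (hT : ∀ x ∈ closure C, T *ᵥ x ∈ closure C)
    (hT0 : T ≠ 0) {v : Vd d} (hv : v ∈ C) : T *ᵥ v ≠ 0 := by
  intro hTv
  refine hT0 (Matrix.toLin'.injective (LinearMap.ext_on hC.span_eq_top fun x hx => ?_))
  obtain ⟨s, hs, hvx⟩ := hC.coneDominates_of_mem hv x
  have h1 : -(s • T *ᵥ x) ∈ closure C := by
    simpa [Matrix.mulVec_sub, Matrix.mulVec_smul, hTv] using hT _ hvx
  have h2 := hC.eq_zero_of_mem_closure_of_neg_mem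
    (hC.smul_mem_closure (hT x (subset_closure hx)) hs.le) h1
  simpa [hs.ne'] using h2

theorem exists_mem_closure_mulVec_eq (hC : IsProperCone C) (hG : ∀ k, ConeAut C (G k))
    (hδ : ∀ k, 0 < δ k) (hT : Tendsto (fun k => δ k • G k) atTop (𝓝 T)) {u z : Vd d}
    (hz : z ∈ closure C) {ε : ℝ} (hε : 0 < ε)
    (hzu : ∀ᶠ k in atTop, δ k • (G k *ᵥ u) - ε • z ∈ closure C) :
    ∃ v ∈ closure C, T *ᵥ v = z := by
  obtain ⟨m, hm, hnorm⟩ := hC.exists_pos_mul_norm_le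
  set y : ℕ → Vd d := fun k => (δ k)⁻¹ • ((G k)⁻¹ *ᵥ z)
  refine exists_mem_mulVec_eq_of_tendsto hT isClosed_closure (y := y)
    (fun k => hC.smul_mem_closure ((hG k).inv.mulVec_mem_closure hz) (inv_nonneg.2 (hδ k).le))
    (R := ‖ε⁻¹ • u‖ / m) (hzu.mono fun k hk => ?_) fun k => ?_
  · have hbound : ε⁻¹ • u - y k ∈ closure C := by
      have hδk := (hδ k).ne'
      have := hC.smul_mem_closure ((hG k).inv.mulVec_mem_closure hk)
        (inv_nonneg.2 (mul_pos (hδ k) hε).le)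
      rwa [Matrix.mulVec_sub, Matrix.mulVec_smul, Matrix.mulVec_smul, (hG k).inv_mulVec_mulVec,
        show (δ k * ε)⁻¹ • (δ k • u - ε • (G k)⁻¹ *ᵥ z) = ε⁻¹ • u - y k by
          simp only [y]; match_scalars <;> field_simp] at this
    rw [le_div_iff₀ hm, mul_comm]
    exact hnorm _ _ (hC.smul_mem_closure ((hG k).inv.mulVec_mem_closure hz)
      (inv_nonneg.2 (hδ k).le)) hbound
  · simp only [y, Matrix.smul_mulVec, Matrix.mulVec_smul, (hG k).mulVec_inv_mulVec, smul_smul,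
      inv_mul_cancel₀ (hδ k).ne', one_smul]

theorem exists_mulVec_eq_of_inFace (hC : IsProperCone C) (hG : ∀ k, ConeAut C (G k))
    (hδ : ∀ k, 0 < δ k) (hT : Tendsto (fun k => δ k • G k) atTop (𝓝 T)) {u x w : Vd d}
    (hu : u ∈ C) (hx : x ∈ closure C) {a b : ℝ} (ha : 0 < a) (hb : 0 < b)
    (hxTu : x - a • T *ᵥ u ∈ closure C)
    (hWx : ∀ᶠ k in atTop, δ k • (G k *ᵥ u) - b • x ∈ closure C) (hw : InFace C x w) :
    ∃ v ∈ C, T *ᵥ v = w := by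
  obtain ⟨⟨e, he, hxw⟩, ⟨e', he', hwx⟩⟩ := (hC.inFace_iff hx).1 hw
  set z := w - (e' * a) • T *ᵥ u
  have hz : z ∈ closure C := hC.sub_smul_mem_closure_trans hwx hxTu he'.le
  have hwz : w - (1 : ℝ) • z ∈ closure C := by
    simpa [z] using hC.smul_mem_closure
      (hC.mulVec_mem_closure_of_tendsto hG hδ hT (subset_closure hu)) (by positivity)
  obtain ⟨v, hv, hTv⟩ := hC.exists_mem_closure_mulVec_eq hG hδ hT hz (by positivity)
    (hWx.mono fun k hk => hC.sub_smul_mem_closure_trans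
      (hC.sub_smul_mem_closure_trans hk hxw hb.le) hwz (by positivity))
  refine ⟨v + (e' * a) • u, ?_, ?_⟩
  · simpa [add_comm] using hC.add_mem_of_mem_closure (hC.smul_mem hu (by positivity)) hv
  · rw [Matrix.mulVec_add, Matrix.mulVec_smul, hTv, sub_add_cancel]

theorem image_mulVec_eq_setOf_inFace (hC : IsProperCone C) (hG : ∀ k, ConeAut C (G k))
    (hδ : ∀ k, 0 < δ k) (hT : Tendsto (fun k => δ k • G k) atTop (𝓝 T)) (hT0 : T ≠ 0)
    {u x : Vd d} (hu : u ∈ C) (hx : x ∈ closure C) (hx0 : x ≠ 0) {P : ℕ → Vd d}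
    (hP : Tendsto P atTop (𝓝 x)) (hPx : ∀ᶠ k in atTop, P k - (1 / 2 : ℝ) • x ∈ closure C)
    {κ : ℝ} (hκ : 0 < κ)
    (hPG : ∀ᶠ k in atTop, ∃ α β : ℝ, 0 ≤ α ∧ 0 ≤ β ∧ κ ≤ α * β ∧
      δ k • (G k *ᵥ u) - α • P k ∈ closure C ∧ P k - β • (δ k • (G k *ᵥ u)) ∈ closure C) :
    (T *ᵥ ·) '' C = {w | InFace C x w} := by
  have hTC : ∀ y ∈ closure C, T *ᵥ y ∈ closure C :=
    fun y hy => hC.mulVec_mem_closure_of_tendsto hG hδ hT hy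
  set W : ℕ → Vd d := fun k => δ k • (G k *ᵥ u)
  have hW : Tendsto W atTop (𝓝 (T *ᵥ u)) := by
    have : Tendsto (fun k => (δ k • G k) *ᵥ u) atTop (𝓝 (T *ᵥ u)) :=
      ((continuous_id.matrix_mulVec continuous_const).tendsto T).comp hT
    simpa [W, Matrix.smul_mulVec] using this
  have hWC : ∀ k, W k ∈ closure C :=
    fun k => hC.smul_mem_closure (subset_closure ((hG k).mulVec_mem hu)) (hδ k).le
  have hPC : ∀ᶠ k in atTop, P k ∈ closure C := hPx.mono fun k hk => by
    simpa using hC.add_mem_closure hk (hC.smul_mem_closure hx (by norm_num : (0 : ℝ) ≤ 1 / 2))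
  obtain ⟨a, ha, hPW⟩ := hC.exists_pos_eventually_sub_smul_mem hP hx0 hW hPC
    (.of_forall hWC) hκ (hPG.mono fun k ⟨α, β, hα, _, hαβ, h1, h2⟩ =>
      ⟨β, α, hα, by linarith [mul_comm α β], h2, h1⟩)
  obtain ⟨b, hb, hWP⟩ := hC.exists_pos_eventually_sub_smul_mem hW
    (hC.mulVec_ne_zero hTC hT0 hu) hP (.of_forall hWC) hPC hκ
    (hPG.mono fun k ⟨α, β, _, hβ, hαβ, h1, h2⟩ => ⟨α, β, hβ, hαβ, h1, h2⟩)
  have hxTu : x - a • T *ᵥ u ∈ closure C :=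
    isClosed_closure.mem_of_tendsto (hP.sub (hW.const_smul a)) hPW
  have hTux : T *ᵥ u - b • x ∈ closure C :=
    isClosed_closure.mem_of_tendsto (hW.sub (hP.const_smul b)) hWP
  refine Set.Subset.antisymm (Set.image_subset_iff.2 fun v hv =>
    hC.inFace_mulVec hTC hu hx ⟨a, ha, hxTu⟩ ⟨b, hb, hTux⟩ hv) fun w (hw : InFace C x w) =>
    hC.exists_mulVec_eq_of_inFace hG hδ hT hu hx ha (by positivity : 0 < b * (1 / 2)) hxTu
      ?_ hw
  filter_upwards [hWP, hPx] with k h1 h2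
  exact hC.sub_smul_mem_closure_trans h1 h2 hb.le

end IsProperCone

theorem exists_sign_subseq_pos {d : ℕ} {G : ℕ → Md d} {c : ℕ → ℝ} {T : Md d}
    (hconv : Tendsto (fun n => c n • G n) atTop (𝓝 T)) (hT0 : T ≠ 0) :
    ∃ σ : ℝ, (σ = 1 ∨ σ = -1) ∧ ∃ φ : ℕ → ℕ, StrictMono φ ∧ ∀ k, 0 < σ * c (φ k) := by
  have hne : ∀ᶠ n in atTop, c n ≠ 0 := by
    by_contra h
    refine hT0 (isClosed_singleton.mem_of_frequently_of_tendsto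
      ((not_eventually.1 h).mono fun n hn => ?_) hconv)
    simp [not_not.1 hn]
  by_cases hpos : ∃ᶠ n in atTop, 0 < c n
  · exact ⟨1, Or.inl rfl, by simpa using extraction_of_frequently_atTop hpos⟩
  · refine ⟨-1, Or.inr rfl, extraction_of_frequently_atTop (P := fun n => 0 < -1 * c n) ?_⟩
    refine ((not_frequently.1 hpos).and hne).frequently.mono fun n ⟨h1, h2⟩ => ?_
    simpa using lt_of_le_of_ne (not_lt.1 h1) h2

/-- if `g_n ∈ Aut(Ω)` tracks a sequence `p_n ∈ [p₀, x)` converging to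
the boundary point `x = [ux]` within bounded Hilbert distance, and `g_n → T` in
`P(End(ℝ^d))`, then `T(Ω) = F_Ω(x)`; in particular `image T = span F_Ω(x)`. -/
theorem stmt15 {d : ℕ} (C : Set (Vd d)) (hC : IsProperCone C)
    (u₀ : Vd d) (hu₀ : u₀ ∈ C) (ux : Vd d) (hux : ux ∈ closure C) (hux0 : ux ≠ 0)
    (huxb : ux ∉ C) (p : ℕ → Vd d)
    (hp : ∀ n, ∃ a b : ℝ, 0 < a ∧ 0 ≤ b ∧ p n = a • u₀ + b • ux)
    (hpx : ∃ c : ℕ → ℝ, Tendsto (fun n => c n • p n) atTop (nhds ux))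
    (G : ℕ → Md d) (hG : ∀ n, ConeAut C (G n))
    (M : ℝ) (hbdd : ∀ n, hilbertDist C ((G n).mulVec u₀) (p n) ≤ M)
    (T : Md d) (hT0 : T ≠ 0) (c' : ℕ → ℝ)
    (hconv : Tendsto (fun n => c' n • G n) atTop (nhds T)) :
    (∀ v ∈ C, ∃ w : Vd d, (w = T.mulVec v ∨ w = -(T.mulVec v)) ∧ InFace C ux w) ∧
      (∀ w : Vd d, InFace C ux w → w ≠ 0 → ∃ v ∈ C, ∃ e : ℝ, e ≠ 0 ∧ T.mulVec v = e • w) ∧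
      LinearMap.range (Matrix.toLin' T) = Submodule.span ℝ {w : Vd d | InFace C ux w} := by
  obtain ⟨σ, hσ, φ, hφ, hσc⟩ := exists_sign_subseq_pos hconv hT0
  have hσ0 : σ ≠ 0 := by rcases hσ with rfl | rfl <;> norm_num
  obtain ⟨c, hc⟩ := hpx
  have hcp := hφ.tendsto_atTop.eventually
    (hC.eventually_pos_and_sub_smul_mem hu₀ hux hux0 huxb hp hc)
  have hpC : ∀ n, p n ∈ C := fun n => by
    obtain ⟨a, b, ha, hb, hpn⟩ := hp n
    exact hpn ▸ hC.add_mem_of_mem_closure (hC.smul_mem hu₀ ha) (hC.smul_mem_closure hux hb)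
  have hF : ((σ • T) *ᵥ ·) '' C = {w | InFace C ux w} :=
    hC.image_mulVec_eq_setOf_inFace (G := fun k => G (φ k)) (fun k => hG _) hσc
      (by simpa [mul_smul] using (hconv.comp hφ.tendsto_atTop).const_smul σ)
      (smul_ne_zero hσ0 hT0) hu₀ hux hux0 (hc.comp hφ.tendsto_atTop) (hcp.mono fun k hk => hk.2)
      (Real.exp_pos _) (hcp.mono fun k hk => hC.exists_sub_smul_mem_of_hilbertDist_le
        (hC.zero_notMem hux0) ((hG _).mulVec_mem hu₀) (hpC _) (hbdd _) (hσc k) hk.1)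
  refine ⟨fun v hv => ⟨(σ • T) *ᵥ v, ?_, hF.subset ⟨v, hv, rfl⟩⟩,
    fun w hw _ => ?_, ?_⟩
  · rcases hσ with rfl | rfl <;> simp [Matrix.neg_mulVec]
  · obtain ⟨v, hv, hTv⟩ := hF.symm.subset hw
    refine ⟨v, hv, σ, hσ0, ?_⟩
    rw [← hTv]
    rcases hσ with rfl | rfl <;> simp [Matrix.neg_mulVec]
  · rw [← LinearMap.range_smul _ σ hσ0, ← map_smul, hC.range_toLin'_eq_span_image, hF]
end
end

section
/- Let Ω ⊂ P(ℝ^d) be a properly convex domain, x₁, x₂ ∈ ∂Ω with (x₁,x₂) ⊂ Ω, and A, B ⊂ ∂Ω open with disjoint closures. Then there exist disjoint neighborhoods V₁, V₂ of x₁, x₂ in ∂Ω such that for every φ ∈ Aut(Ω), at least one of the four sets φ(V₁)∩A, φ(V₁)∩B, φ(V₂)∩A, φ(V₂)∩B is empty. -/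
/-!
If no such neighbourhoods existed, then for every `n` some automorphism `φ n` would map each of
the neighbourhoods `[B(u₁, 1/(n+1))]` and `[B(u₂, 1/(n+1))]` of `[u₁]`, `[u₂]` onto a set meeting
both `A` and `B`. Rescaled, a subsequence of `φ n` converges to some `T ≠ 0` in `End(ℝ^d)` which
preserves the closed cone. Such a `T` cannot vanish on the point `u₁ + u₂` of the open cone, so
`T uᵢ ≠ 0` for some `i`; then `φ n` maps the neighbourhoods of `[uᵢ]` ever closer to `[T uᵢ]`,
which therefore lies in `closure A ∩ closure B = ∅`. The neighbourhoods of `[u₁]` and `[u₂]` are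
made disjoint by intersecting them with disjoint open sets: `[u₁] ≠ [u₂]` because the open segment
between them lies in `Ω` while `[u₁]` does not, and projective space is Hausdorff.
-/

open Matrix Topology Filter
open scoped MatrixGroups

noncomputable section

open scoped LinearAlgebra.Projectivization

namespace Projectivization

variable {V : Type*} [NormedAddCommGroup V] [NormedSpace ℝ V]

theorem tendsto_mk {α : Type*} {l : Filter α} {w : α → V} (hw : ∀ n, w n ≠ 0) {v : V}
    (hv : v ≠ 0) (h : Tendsto w l (𝓝 v)) :
    Tendsto (fun n => mk ℝ (w n) (hw n)) l (𝓝 (mk ℝ v hv)) :=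
  (continuous_quotient_mk'.tendsto _).comp (tendsto_subtype_rng.2 h)

instance [FiniteDimensional ℝ V] : T2Space (ℙ ℝ V) := by
  refine ⟨Projectivization.ind fun u hu => Projectivization.ind fun v hv huv => ?_⟩
  have hu_span : u ∉ ℝ ∙ v := fun h => by
    obtain ⟨a, rfl⟩ := Submodule.mem_span_singleton.1 h
    exact huv ((mk_eq_mk_iff' ℝ _ _ hu hv).2 ⟨a, rfl⟩)
  obtain ⟨f, hfu, hfv⟩ := Submodule.exists_dual_map_eq_bot_of_notMem hu_span inferInstance
  have hfv : f v = 0 :=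
    LinearMap.le_ker_iff_map.2 hfv (Submodule.mem_span_singleton_self v)
  let F : ℙ ℝ V → ℝ := Projectivization.lift (fun x => |f x| / ‖(x : V)‖) <| by
    rintro ⟨a, ha⟩ ⟨b, hb⟩ t rfl
    have ht : t ≠ 0 := by rintro rfl; simp at ha
    simp only [map_smul, smul_eq_mul, abs_mul, norm_smul, Real.norm_eq_abs]
    exact mul_div_mul_left _ _ (abs_ne_zero.2 ht)
  have hF : Continuous F := by
    refine Continuous.quotient_lift (Continuous.div ?_ ?_ fun x => norm_ne_zero_iff.2 x.2) _
    · exact (LinearMap.continuous_of_finiteDimensional f).abs.comp continuous_subtype_val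
    · exact continuous_norm.comp continuous_subtype_val
  refine separated_by_continuous hF ?_
  show |f u| / ‖u‖ ≠ |f v| / ‖v‖
  rw [hfv, abs_zero, zero_div]
  exact div_ne_zero (abs_ne_zero.2 hfu) (norm_ne_zero_iff.2 hu)

end Projectivization

theorem isOpen_projSet {d : ℕ} {U : Set (Vd d)} (hU : IsOpen U) : IsOpen (projSet U) := by
  show IsOpen (Projectivization.mk' ℝ ⁻¹' projSet U)
  have : Projectivization.mk' ℝ ⁻¹' projSet U =
      ⋃ c : ℝˣ, (fun x : {v : Vd d // v ≠ 0} => c • x.1) ⁻¹' U := by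
    ext ⟨x, hx⟩
    simp only [projSet, Set.mem_preimage, Set.mem_ofPred_eq, Set.mem_iUnion]
    constructor
    · rintro ⟨v, hv, hvU, hxv⟩
      obtain ⟨c, rfl⟩ := (Projectivization.mk_eq_mk_iff ℝ v x hv hx).1 hxv.symm
      exact ⟨c, hvU⟩
    · rintro ⟨c, hc⟩
      exact ⟨c • x, (smul_ne_zero_iff_ne c).2 hx, hc,
        ((Projectivization.mk_eq_mk_iff ℝ _ _ _ _).2 ⟨c, rfl⟩).symm⟩
  rw [this]
  exact isOpen_iUnion fun c => hU.preimage ((continuous_const_smul _).comp continuous_subtype_val)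

section Cone

variable {d : ℕ} {C : Set (Vd d)}

theorem IsProperCone.smul_mem_closure_s19 (hC : IsProperCone C) {t : ℝ} (ht : 0 < t) {v : Vd d}
    (hv : v ∈ closure C) : t • v ∈ closure C :=
  Set.MapsTo.closure (fun w hw => hC.2.2.2.1 w hw t ht) (continuous_const_smul t) hv

theorem ConeAut.mapsTo_closure {g : Md d} (hg : ConeAut C g) :
    Set.MapsTo g.mulVec (closure C) (closure C) :=
  Set.MapsTo.closure (fun _ hw => hg.2 ▸ Set.mem_image_of_mem _ hw)
    (Continuous.matrix_mulVec continuous_const continuous_id)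

theorem IsProperCone.mapsTo_closure_of_tendsto (hC : IsProperCone C) {α : Type*} {l : Filter α}
    [l.NeBot] {g : α → Md d} {c : α → ℝ} {T : Md d} (hg : ∀ n, ConeAut C (g n))
    (hc : ∀ n, 0 < c n) (hT : Tendsto (fun n => c n • g n) l (𝓝 T)) :
    Set.MapsTo T.mulVec (closure C) (closure C) := fun v hv =>
  isClosed_closure.mem_of_tendsto
    ((Continuous.matrix_mulVec continuous_id continuous_const).continuousAt.tendsto.comp hT)
    (Eventually.of_forall fun n => by
      simpa only [Function.comp_apply, id, Matrix.smul_mulVec] using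
        hC.smul_mem_closure_s19 (hc n) ((hg n).mapsTo_closure hv))

/-- Otherwise `T` would map a whole line through `v` into `closure C`, which contains no line. -/
theorem IsProperCone.mulVec_ne_zero_s19 (hC : IsProperCone C) {T : Md d} (hT : T ≠ 0)
    (hTC : Set.MapsTo T.mulVec (closure C) (closure C)) {v : Vd d} (hv : v ∈ C) :
    T *ᵥ v ≠ 0 := by
  intro hTv
  refine hT ((Matrix.toLin' (R := ℝ)).map_eq_zero_iff.1 (LinearMap.ext fun w => ?_))
  have hnear : ∀ s : ℝ, ∀ᶠ t : ℝ in 𝓝 0, v + (s * t) • w ∈ C := fun s =>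
    (continuous_const.add ((continuous_const.mul continuous_id).smul continuous_const)).continuousAt
      |>.preimage_mem_nhds (by simpa using hC.1.mem_nhds hv)
  obtain ⟨t, ⟨htw, htw'⟩, ht⟩ := (((hnear 1).and (hnear (-1))).filter_mono nhdsWithin_le_nhds
    |>.and (self_mem_nhdsWithin (s := Set.Ioi 0))).exists
  have hTw : ∀ s : ℝ, T *ᵥ (v + (s * t) • w) = s • t • T *ᵥ w := fun s => by
    rw [Matrix.mulVec_add, Matrix.mulVec_smul, hTv, zero_add, mul_smul]
  have hpos := hTC (subset_closure htw)
  have hneg := hTC (subset_closure htw')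
  rw [hTw, one_smul] at hpos
  rw [hTw, neg_one_smul] at hneg
  simpa [ne_of_gt ht] using hC.2.2.2.2 _ hpos hneg

end Cone

theorem exists_subseq_tendsto_pos_smul {E : Type*} [NormedAddCommGroup E] [NormedSpace ℝ E]
    [ProperSpace E] {x : ℕ → E} (hx : ∀ n, x n ≠ 0) :
    ∃ T ≠ 0, ∃ (ψ : ℕ → ℕ) (c : ℕ → ℝ), StrictMono ψ ∧ (∀ n, 0 < c n) ∧
      Tendsto (fun n => c n • x (ψ n)) atTop (𝓝 T) := by
  have hsphere : ∀ n, ‖x n‖⁻¹ • x n ∈ Metric.sphere (0 : E) 1 := fun n => by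
    simp [norm_smul, hx n]
  obtain ⟨T, hT, ψ, hψ, hlim⟩ := (isCompact_sphere (0 : E) 1).tendsto_subseq hsphere
  exact ⟨T, Metric.ne_of_mem_sphere hT one_ne_zero, ψ, fun n => ‖x (ψ n)‖⁻¹, hψ,
    fun n => inv_pos.2 (norm_pos_iff.2 (hx _)), hlim⟩

section Dynamics

variable {d : ℕ}

theorem exists_of_pAct_image_projSet_inter_nonempty {γ : GL (Fin d) ℝ} {U : Set (Vd d)}
    {A : Set (ℙ ℝ (Vd d))} (h : (pAct γ '' projSet U ∩ A).Nonempty) :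
    ∃ v ∈ U, ∃ hv : (γ : Md d) *ᵥ v ≠ 0, .mk ℝ _ hv ∈ A := by
  obtain ⟨_, ⟨_, ⟨v, hv, hvU, rfl⟩, rfl⟩, hA⟩ := h
  exact ⟨v, hvU, _, hA⟩

theorem tendsto_mk_mulVec {α : Type*} {l : Filter α} {g : α → Md d} {c : α → ℝ} {T : Md d}
    (hc : ∀ n, c n ≠ 0) (hT : Tendsto (fun n => c n • g n) l (𝓝 T)) {v : α → Vd d} {u : Vd d}
    (hv : Tendsto v l (𝓝 u)) (hgv : ∀ n, g n *ᵥ v n ≠ 0) (hTu : T *ᵥ u ≠ 0) :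
    Tendsto (fun n => Projectivization.mk ℝ (g n *ᵥ v n) (hgv n)) l
      (𝓝 (.mk ℝ (T *ᵥ u) hTu)) := by
  have hcgv : ∀ n, (c n • g n) *ᵥ v n ≠ 0 := fun n => by
    rw [Matrix.smul_mulVec]; exact smul_ne_zero (hc n) (hgv n)
  refine (Projectivization.tendsto_mk hcgv hTu ?_).congr fun n => ?_
  · exact (Continuous.matrix_mulVec continuous_fst continuous_snd).continuousAt.tendsto.comp
      (hT.prodMk_nhds hv)
  · exact (Projectivization.mk_eq_mk_iff' ℝ _ _ _ _).2 ⟨c n, (Matrix.smul_mulVec _ _ _).symm⟩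

def HitsBoth (γ : GL (Fin d) ℝ) (V A B : Set (ℙ ℝ (Vd d))) : Prop :=
  (pAct γ '' V ∩ A).Nonempty ∧ (pAct γ '' V ∩ B).Nonempty

theorem HitsBoth.mono {γ : GL (Fin d) ℝ} {V W A B : Set (ℙ ℝ (Vd d))} (h : HitsBoth γ V A B)
    (hVW : V ⊆ W) : HitsBoth γ W A B :=
  ⟨h.1.mono (Set.inter_subset_inter_left _ (Set.image_mono hVW)),
    h.2.mono (Set.inter_subset_inter_left _ (Set.image_mono hVW))⟩

theorem not_hitsBoth_and_hitsBoth_iff {γ : GL (Fin d) ℝ} {V₁ V₂ A B : Set (ℙ ℝ (Vd d))} :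
    ¬(HitsBoth γ V₁ A B ∧ HitsBoth γ V₂ A B) ↔
      pAct γ '' V₁ ∩ A = ∅ ∨ pAct γ '' V₁ ∩ B = ∅ ∨
        pAct γ '' V₂ ∩ A = ∅ ∨ pAct γ '' V₂ ∩ B = ∅ := by
  simp only [HitsBoth, Set.nonempty_iff_ne_empty]
  tauto

theorem not_forall_hitsBoth_of_tendsto {g : ℕ → GL (Fin d) ℝ} {c : ℕ → ℝ} {T : Md d}
    (hc : ∀ n, c n ≠ 0) (hT : Tendsto (fun n => c n • (g n : Md d)) atTop (𝓝 T)) {u : Vd d}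
    (hTu : T *ᵥ u ≠ 0) {r : ℕ → ℝ} (hr : Tendsto r atTop (𝓝 0)) {A B : Set (ℙ ℝ (Vd d))}
    (hAB : closure A ∩ closure B = ∅) :
    ¬ ∀ n, HitsBoth (g n) (projSet (Metric.ball u (r n))) A B := by
  intro h
  have hlim : ∀ X : Set (ℙ ℝ (Vd d)),
      (∀ n, (pAct (g n) '' projSet (Metric.ball u (r n)) ∩ X).Nonempty) →
        Projectivization.mk ℝ (T *ᵥ u) hTu ∈ closure X := by
    intro X hX
    choose v hvu hv hvX using fun n => exists_of_pAct_image_projSet_inter_nonempty (hX n)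
    have hvu : Tendsto v atTop (𝓝 u) := tendsto_iff_dist_tendsto_zero.2 <|
      squeeze_zero (fun _ => dist_nonneg) (fun n => (hvu n).le) hr
    exact mem_closure_of_tendsto (tendsto_mk_mulVec hc hT hvu hv hTu) (Eventually.of_forall hvX)
  exact hAB.subset ⟨hlim A fun n => (h n).1, hlim B fun n => (h n).2⟩

end Dynamics

section MainArgument

variable {d : ℕ} {C : Set (Vd d)}

theorem IsProperCone.mk_ne_mk_of_forall_add_mem (hC : IsProperCone C) {u₁ u₂ : Vd d}
    (h₁0 : u₁ ≠ 0) (h₂0 : u₂ ≠ 0) (h₁b : u₁ ∉ C)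
    (hseg : ∀ s t : ℝ, 0 < s → 0 < t → s • u₁ + t • u₂ ∈ C) :
    Projectivization.mk ℝ u₁ h₁0 ≠ .mk ℝ u₂ h₂0 := by
  intro h
  obtain ⟨a, rfl⟩ := (Projectivization.mk_eq_mk_iff' ℝ _ _ h₂0 h₁0).1 h.symm
  have hpos : 0 < |a| + 1 + a := by linarith [neg_abs_le a]
  have h₁C := hC.2.2.2.1 _ (hseg (|a| + 1) 1 (by positivity) one_pos) _ (inv_pos.2 hpos)
  rw [one_smul, ← add_smul, smul_smul, inv_mul_cancel₀ hpos.ne', one_smul] at h₁C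
  exact h₁b h₁C

theorem projSet_ball_inter_mem_nhdsWithin {u : Vd d} (hu : u ≠ 0) {r : ℝ} (hr : 0 < r)
    {O : Set (ℙ ℝ (Vd d))} (hO : IsOpen O) (huO : .mk ℝ u hu ∈ O) (S : Set (ℙ ℝ (Vd d))) :
    projSet (Metric.ball u r) ∩ O ∩ S ∈ 𝓝[S] (.mk ℝ u hu) :=
  inter_mem (mem_nhdsWithin_of_mem_nhds <| ((isOpen_projSet Metric.isOpen_ball).inter hO).mem_nhds
    ⟨⟨u, hu, Metric.mem_ball_self hr, rfl⟩, huO⟩) self_mem_nhdsWithin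

section MatrixNorm

attribute [local instance] Matrix.normedAddCommGroup Matrix.normedSpace

theorem IsProperCone.not_forall_hitsBoth [NeZero d] (hC : IsProperCone C) {u₁ u₂ : Vd d}
    (hu : u₁ + u₂ ∈ C) {A B : Set (ℙ ℝ (Vd d))} (hAB : closure A ∩ closure B = ∅)
    {φ : ℕ → GL (Fin d) ℝ} (hφ : ∀ n, ConeAut C (φ n)) :
    ¬ ∀ n : ℕ, HitsBoth (φ n) (projSet (Metric.ball u₁ (1 / (n + 1)))) A B ∧
      HitsBoth (φ n) (projSet (Metric.ball u₂ (1 / (n + 1)))) A B := by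
  intro h
  obtain ⟨T, hT0, ψ, c, hψ, hc, hT⟩ :=
    exists_subseq_tendsto_pos_smul (x := fun n => (φ n : Md d)) fun n => (φ n).ne_zero
  have hTC := hC.mapsTo_closure_of_tendsto (fun n => hφ (ψ n)) hc hT
  have hTu : T *ᵥ u₁ ≠ 0 ∨ T *ᵥ u₂ ≠ 0 := by
    by_contra! h0
    exact hC.mulVec_ne_zero_s19 hT0 hTC hu (by rw [Matrix.mulVec_add, h0.1, h0.2, add_zero])
  have hr : Tendsto (fun n => 1 / ((ψ n : ℕ) + 1 : ℝ)) atTop (𝓝 0) :=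
    tendsto_one_div_add_atTop_nhds_zero_nat.comp hψ.tendsto_atTop
  rcases hTu with hTu | hTu
  · exact not_forall_hitsBoth_of_tendsto (fun n => (hc n).ne') hT hTu hr hAB fun n => (h (ψ n)).1
  · exact not_forall_hitsBoth_of_tendsto (fun n => (hc n).ne') hT hTu hr hAB fun n => (h (ψ n)).2

end MatrixNorm

end MainArgument

theorem stmt19_general {d : ℕ} (C : Set (Vd d)) (hC : IsProperCone C)
    (u₁ u₂ : Vd d) (h₁0 : u₁ ≠ 0) (h₂0 : u₂ ≠ 0)
    (h₁b : u₁ ∉ C)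
    (hseg : ∀ s t : ℝ, 0 < s → 0 < t → s • u₁ + t • u₂ ∈ C)
    (A B : Set (Projectivization ℝ (Vd d)))
    (hAB : closure A ∩ closure B = ∅) :
    ∃ V₁ V₂ : Set (Projectivization ℝ (Vd d)),
      V₁ ∈ nhdsWithin (Projectivization.mk ℝ u₁ h₁0) (closure (projSet C) \ projSet C) ∧
      V₂ ∈ nhdsWithin (Projectivization.mk ℝ u₂ h₂0) (closure (projSet C) \ projSet C) ∧
      V₁ ∩ V₂ = ∅ ∧
      ∀ φ : GL (Fin d) ℝ, ConeAut C (↑φ : Md d) →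
        (pAct φ '' V₁ ∩ A = ∅ ∨ pAct φ '' V₁ ∩ B = ∅ ∨
         pAct φ '' V₂ ∩ A = ∅ ∨ pAct φ '' V₂ ∩ B = ∅) := by
  have : NeZero d := ⟨by rintro rfl; exact h₁0 (Subsingleton.elim _ _)⟩
  obtain ⟨O₁, O₂, hO₁, hO₂, hu₁O, hu₂O, hO⟩ :=
    t2_separation (hC.mk_ne_mk_of_forall_add_mem h₁0 h₂0 h₁b hseg)
  by_contra hcon
  have hφ : ∀ n : ℕ, ∃ φ : GL (Fin d) ℝ, ConeAut C φ ∧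
      HitsBoth φ (projSet (Metric.ball u₁ (1 / (n + 1)))) A B ∧
      HitsBoth φ (projSet (Metric.ball u₂ (1 / (n + 1)))) A B := by
    intro n
    by_contra! h
    have hr : (0 : ℝ) < 1 / (n + 1) := Nat.one_div_pos_of_nat
    set S := closure (projSet C) \ projSet C
    refine hcon ⟨_, _, projSet_ball_inter_mem_nhdsWithin h₁0 hr hO₁ hu₁O S,
      projSet_ball_inter_mem_nhdsWithin h₂0 hr hO₂ hu₂O S, ?_, fun φ hφ =>
        not_hitsBoth_and_hitsBoth_iff.1 fun hh => h φ hφ (hh.1.mono ?_) (hh.2.mono ?_)⟩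
    · exact Set.disjoint_iff_inter_eq_empty.1 <| hO.mono
        (Set.inter_subset_left.trans Set.inter_subset_right)
        (Set.inter_subset_left.trans Set.inter_subset_right)
    all_goals exact Set.inter_subset_left.trans Set.inter_subset_left
  choose φ hφ hits using hφ
  exact hC.not_forall_hitsBoth (by simpa using hseg 1 1 one_pos one_pos) hAB hφ hits

/-- given two boundary points `[u₁], [u₂]` joined by a segment through
`Ω`, and open subsets `A, B` of `∂Ω` with disjoint closures, there are disjoint
neighborhoods `V₁, V₂` of `[u₁], [u₂]` in `∂Ω` such that for every automorphism `φ`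
at least one of `φ(V₁) ∩ A`, `φ(V₁) ∩ B`, `φ(V₂) ∩ A`, `φ(V₂) ∩ B` is empty. -/
theorem stmt19 {d : ℕ} (C : Set (Vd d)) (hC : IsProperCone C)
    (u₁ u₂ : Vd d) (h₁0 : u₁ ≠ 0) (h₂0 : u₂ ≠ 0)
    (h₁c : u₁ ∈ closure C) (h₂c : u₂ ∈ closure C) (h₁b : u₁ ∉ C) (h₂b : u₂ ∉ C)
    (hseg : ∀ s t : ℝ, 0 < s → 0 < t → s • u₁ + t • u₂ ∈ C)
    (A B : Set (Projectivization ℝ (Vd d)))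
    (hA : ∃ A' : Set (Projectivization ℝ (Vd d)), IsOpen A' ∧
      A = A' ∩ (closure (projSet C) \ projSet C))
    (hB : ∃ B' : Set (Projectivization ℝ (Vd d)), IsOpen B' ∧
      B = B' ∩ (closure (projSet C) \ projSet C))
    (hAB : closure A ∩ closure B = ∅) :
    ∃ V₁ V₂ : Set (Projectivization ℝ (Vd d)),
      V₁ ∈ nhdsWithin (Projectivization.mk ℝ u₁ h₁0) (closure (projSet C) \ projSet C) ∧
      V₂ ∈ nhdsWithin (Projectivization.mk ℝ u₂ h₂0) (closure (projSet C) \ projSet C) ∧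
      V₁ ∩ V₂ = ∅ ∧
      ∀ φ : GL (Fin d) ℝ, ConeAut C (↑φ : Md d) →
        (pAct φ '' V₁ ∩ A = ∅ ∨ pAct φ '' V₁ ∩ B = ∅ ∨
         pAct φ '' V₂ ∩ A = ∅ ∨ pAct φ '' V₂ ∩ B = ∅) :=
  stmt19_general C hC u₁ u₂ h₁0 h₂0 h₁b hseg A B hAB

end
end
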